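/- arXiv:1709.01393 — 2 statements merged into one kernel-verified Lean document; each statement's English description precedes it below -/
import Mathlib

section
/- The polycyclic monoid P_ω (on countably many generators) embeds into the polycyclic monoid P_2. -/
universe u

/-- A directed graph. -/
structure DiGraph : Type (u + 1) where
  V : Type u
  E : Type u
  s : E → V
  r : E → V

namespace DiGraph

variable (G : DiGraph.{u})

/-- A list of edges forms a valid path starting at vertex `v`. -/
def Valid (v : G.V) : List G.E → Prop
  | [] => True
  | e :: l => G.s e = v ∧ Valid (G.r e) l

/-- the endpoint of a list of edges starting at `v`. -/
def dst (v : G.V) : List G.E → G.V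
  | [] => v
  | e :: l => dst (G.r e) l

variable {G}

lemma dst_append (v : G.V) (l₁ l₂ : List G.E) :
    G.dst v (l₁ ++ l₂) = G.dst (G.dst v l₁) l₂ := by
  induction l₁ generalizing v with
  | nil => rfl
  | cons e t ih => simp [dst, ih]

lemma valid_append (v : G.V) (l₁ l₂ : List G.E) :
    G.Valid v (l₁ ++ l₂) ↔ G.Valid v l₁ ∧ G.Valid (G.dst v l₁) l₂ := by
  induction l₁ generalizing v with
  | nil => simp [Valid, dst]
  | cons e t ih => simp [Valid, dst, ih, and_assoc]

variable (G) in
/-- A (finite, directed) path in `G`: a source vertex together with a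
composable list of edges.  Paths of length zero are the vertices. -/
structure GPath : Type u where
  src : G.V
  edges : List G.E
  valid : G.Valid src edges

/-- The range (end vertex) of a path. -/
def GPath.rng (p : G.GPath) : G.V := G.dst p.src p.edges

/-- Concatenation of composable paths. -/
def GPath.comp (p q : G.GPath) (h : p.rng = q.src) : G.GPath :=
  ⟨p.src, p.edges ++ q.edges, by
    rw [valid_append]
    exact ⟨p.valid, by rw [show G.dst p.src p.edges = q.src from h]; exact q.valid⟩⟩

lemma GPath.comp_rng (p q : G.GPath) (h : p.rng = q.src) : (p.comp q h).rng = q.rng := by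
  show G.dst p.src (p.edges ++ q.edges) = _
  rw [dst_append, show G.dst p.src p.edges = q.src from h]; rfl

/-- If `p` is a prefix of the path `q`, the remaining path (so that
`q = p.comp (p.strip q _ _)`). -/
def GPath.strip (p q : G.GPath) (hs : p.src = q.src) (hp : p.edges <+: q.edges) : G.GPath :=
  ⟨p.rng, q.edges.drop p.edges.length, by
    obtain ⟨t, ht⟩ := hp
    have h1 : p.edges ++ q.edges.drop p.edges.length = q.edges := by
      rw [← ht, List.drop_left]
    have h2 : G.Valid p.src (p.edges ++ q.edges.drop p.edges.length) := by
      rw [h1, hs]; exact q.valid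
    exact ((valid_append _ _ _).mp h2).2⟩

lemma GPath.strip_rng (p q : G.GPath) (hs : p.src = q.src) (hp : p.edges <+: q.edges) :
    (p.strip q hs hp).rng = q.rng := by
  show G.dst p.rng (q.edges.drop p.edges.length) = G.dst q.src q.edges
  obtain ⟨t, ht⟩ := hp
  have h1 : p.edges ++ q.edges.drop p.edges.length = q.edges := by
    rw [← ht, List.drop_left]
  conv_rhs => rw [← hs, ← h1]
  rw [dst_append]; rfl

variable (G) in
/-- A nonzero element `a b⁻¹` of the graph inverse semigroup: a pair of
paths with the same range. -/
structure NZ : Type u where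
  a : G.GPath
  b : G.GPath
  h : a.rng = b.rng

/-- The graph inverse semigroup `G(E)` over a directed graph, in normal form:
the elements `a b⁻¹` with `r(a) = r(b)`, together with a zero element. -/
def GIS (G : DiGraph.{u}) : Type u := Option (NZ G)

instance : Zero (GIS G) := ⟨none⟩

open scoped Classical in
/-- The multiplication of the graph inverse semigroup:
`a b⁻¹ · c d⁻¹ = a c₁ d⁻¹` if `c = b c₁`, `a (d b₁)⁻¹` if `b = c b₁`, and `0` otherwise. -/
noncomputable instance : Mul (GIS G) :=
  ⟨fun x y =>
    match x, y with
    | none, _ => none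
    | some _, none => none
    | some ⟨a, b, hab⟩, some ⟨c, d, hcd⟩ =>
      if h : b.src = c.src ∧ b.edges <+: c.edges then
        some ⟨a.comp (b.strip c h.1 h.2) hab, d, by
          exact (GPath.comp_rng _ _ _).trans ((GPath.strip_rng _ _ _ _).trans hcd)⟩
      else if h' : c.src = b.src ∧ c.edges <+: b.edges then
        some ⟨a, d.comp (c.strip b h'.1 h'.2) hcd.symm, by
          exact hab.trans ((GPath.strip_rng _ _ _ _).symm.trans (GPath.comp_rng _ _ _).symm)⟩
      else none⟩

/-- The nonzero element `a b⁻¹` of `G(E)` determined by a pair of paths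
with the same range. -/
def GIS.nz (n : NZ G) : GIS G := some n

/-- The inversion of the graph inverse semigroup: `(u v⁻¹)⁻¹ = v u⁻¹`. -/
def GIS.inv : GIS G → GIS G
  | none => none
  | some ⟨a, b, h⟩ => some ⟨b, a, h.symm⟩

end DiGraph
namespace DiGraph

/-- The graph with one vertex and a loop for each element of `ι`. -/
def bouquet (ι : Type u) : DiGraph.{u} :=
  ⟨PUnit, ι, fun _ => PUnit.unit, fun _ => PUnit.unit⟩

/-- The polycyclic monoid `P_ι` on a set `ι` of generators, realized as the
graph inverse semigroup over the graph with one vertex and `ι` many loops. -/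
def PolyM (ι : Type u) : Type u := GIS (bouquet ι)

noncomputable instance (ι : Type u) : Mul (PolyM ι) :=
  inferInstanceAs (Mul (GIS (bouquet ι)))

instance (ι : Type u) : Zero (PolyM ι) := inferInstanceAs (Zero (GIS (bouquet ι)))

end DiGraph

/-!
The unary code `n ↦ 1ⁿ0` is a prefix code `ℕ → {0,1}*`. A prefix code `c` extends to a
monoid embedding of free monoids that preserves and reflects the prefix order, and products
`a b⁻¹ · c d⁻¹` in a polycyclic monoid are computed only from prefix comparisons between `b`
and `c` and from stripping a prefix. Hence `a b⁻¹ ↦ c(a) c(b)⁻¹` is an injective semigroup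
homomorphism `P_ω → P₂`.
-/

theorem List.IsPrefix.drop_flatMap {α β : Type*} {l₁ l₂ : List α} (h : l₁ <+: l₂)
    (f : α → List β) :
    (l₂.flatMap f).drop (l₁.flatMap f).length = (l₂.drop l₁.length).flatMap f := by
  obtain ⟨t, rfl⟩ := h
  rw [List.flatMap_append, List.drop_left, List.drop_left]

structure IsPrefixCode {ι κ : Type*} (c : ι → List κ) : Prop where
  ne_nil : ∀ a, c a ≠ []
  eq_of_prefix : ∀ a b, c a <+: c b → a = b

namespace IsPrefixCode

variable {ι κ : Type*} {c : ι → List κ}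

theorem flatMap_prefix_flatMap_iff (hc : IsPrefixCode c) {l₁ l₂ : List ι} :
    l₁.flatMap c <+: l₂.flatMap c ↔ l₁ <+: l₂ := by
  refine ⟨fun h => ?_, fun ⟨t, ht⟩ => ⟨t.flatMap c, by rw [← ht, List.flatMap_append]⟩⟩
  induction l₁ generalizing l₂ with
  | nil => exact List.nil_prefix
  | cons a t ih =>
    cases l₂ with
    | nil => exact absurd (List.append_eq_nil_iff.mp (List.prefix_nil.mp h)).1 (hc.ne_nil a)
    | cons b t₂ =>
      simp only [List.flatMap_cons] at h
      have hab : a = b := by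
        rcases List.prefix_or_prefix_of_prefix ((List.prefix_append _ _).trans h)
          (List.prefix_append _ _) with hab | hba
        exacts [hc.eq_of_prefix a b hab, (hc.eq_of_prefix b a hba).symm]
      subst hab
      exact List.cons_prefix_cons.mpr ⟨rfl, ih ((List.prefix_append_right_inj _).mp h)⟩

theorem flatMap_injective (hc : IsPrefixCode c) :
    Function.Injective (List.flatMap c) := by
  intro l₁ l₂ h
  have h₁₂ : l₁ <+: l₂ := hc.flatMap_prefix_flatMap_iff.mp (h ▸ List.prefix_refl _)
  have h₂₁ : l₂ <+: l₁ := hc.flatMap_prefix_flatMap_iff.mp (h ▸ List.prefix_refl _)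
  exact h₁₂.eq_of_length (h₁₂.length_le.antisymm h₂₁.length_le)

end IsPrefixCode

def unaryCode (n : ℕ) : List Bool := List.replicate n true ++ [false]

theorem isPrefixCode_unaryCode : IsPrefixCode unaryCode where
  ne_nil n := by simp [unaryCode]
  eq_of_prefix a b h := by
    induction a generalizing b with
    | zero => cases b <;> simp_all [unaryCode, List.replicate_succ]
    | succ n ih =>
      cases b with
      | zero => simp [unaryCode, List.replicate_succ] at h
      | succ m => exact congrArg _ (ih m (by simpa [unaryCode, List.replicate_succ] using h))

namespace DiGraph

open scoped Classical in
theorem GIS.nz_mul_nz {G : DiGraph.{u}} (a b : G.GPath) (hab : a.rng = b.rng)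
    (c d : G.GPath) (hcd : c.rng = d.rng) :
    GIS.nz ⟨a, b, hab⟩ * GIS.nz ⟨c, d, hcd⟩ =
      if h : b.src = c.src ∧ b.edges <+: c.edges then
        GIS.nz ⟨a.comp (b.strip c h.1 h.2) hab, d,
          (GPath.comp_rng _ _ _).trans ((GPath.strip_rng _ _ _ _).trans hcd)⟩
      else if h' : c.src = b.src ∧ c.edges <+: b.edges then
        GIS.nz ⟨a, d.comp (c.strip b h'.1 h'.2) hcd.symm,
          hab.trans ((GPath.strip_rng _ _ _ _).symm.trans (GPath.comp_rng _ _ _).symm)⟩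
      else 0 :=
  rfl

variable {ι κ : Type u}

theorem valid_bouquet (v : (bouquet ι).V) (l : List ι) : (bouquet ι).Valid v l := by
  induction l generalizing v with
  | nil => trivial
  | cons e t ih => exact ⟨rfl, ih _⟩

def bouquetPath (l : List ι) : (bouquet ι).GPath := ⟨PUnit.unit, l, valid_bouquet _ _⟩

namespace PolyM

def mk (a b : List ι) : PolyM ι := GIS.nz ⟨bouquetPath a, bouquetPath b, rfl⟩

theorem eq_zero_or_eq_mk (x : PolyM ι) : x = 0 ∨ ∃ a b, x = mk a b := by
  rcases x with _ | ⟨⟨⟨⟩, a, _⟩, ⟨⟨⟩, b, _⟩, _⟩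
  exacts [Or.inl rfl, Or.inr ⟨a, b, rfl⟩]

theorem mk_inj {a b c d : List ι} : mk a b = mk c d ↔ a = c ∧ b = d := by
  refine ⟨fun h => ?_, fun ⟨hac, hbd⟩ => hac ▸ hbd ▸ rfl⟩
  cases h
  exact ⟨rfl, rfl⟩

theorem mul_zero (x : PolyM ι) : x * 0 = 0 := by
  rcases x with _ | ⟨_, _, _⟩ <;> rfl

open scoped Classical in
theorem mk_mul_mk (a b c d : List ι) :
    mk a b * mk c d =
      if b <+: c then mk (a ++ c.drop b.length) d
      else if c <+: b then mk a (d ++ b.drop c.length) else 0 := by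
  refine (GIS.nz_mul_nz (bouquetPath a) (bouquetPath b) rfl
    (bouquetPath c) (bouquetPath d) rfl).trans ?_
  by_cases hbc : b <+: c
  · rw [dif_pos ⟨rfl, hbc⟩, if_pos hbc]
    rfl
  by_cases hcb : c <+: b
  · rw [dif_neg (hbc ·.2), dif_pos ⟨rfl, hcb⟩, if_neg hbc, if_pos hcb]
    rfl
  · rw [dif_neg (hbc ·.2), dif_neg (hcb ·.2), if_neg hbc, if_neg hcb]
    rfl

theorem mk_ne_zero (a b : List ι) : mk a b ≠ 0 := Option.some_ne_none _

def mapCode (c : ι → List κ) : PolyM ι → PolyM κ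
  | none => none
  | some ⟨a, b, _⟩ => mk (a.edges.flatMap c) (b.edges.flatMap c)

variable {c : ι → List κ}

theorem mapCode_zero : mapCode c 0 = 0 := rfl

theorem mapCode_mk (a b : List ι) : mapCode c (mk a b) = mk (a.flatMap c) (b.flatMap c) := rfl

theorem mapCode_mul (hc : IsPrefixCode c) (x y : PolyM ι) :
    mapCode c (x * y) = mapCode c x * mapCode c y := by
  rcases eq_zero_or_eq_mk x with rfl | ⟨a, b, rfl⟩
  · rfl
  rcases eq_zero_or_eq_mk y with rfl | ⟨a', b', rfl⟩
  · simp only [mul_zero, mapCode_zero]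
  have hp {l₁ l₂ : List ι} := hc.flatMap_prefix_flatMap_iff (l₁ := l₁) (l₂ := l₂)
  rw [mk_mul_mk, mapCode_mk, mapCode_mk, mk_mul_mk]
  by_cases h₁ : b <+: a'
  · rw [if_pos h₁, if_pos (hp.mpr h₁), mapCode_mk, List.flatMap_append, h₁.drop_flatMap]
  by_cases h₂ : a' <+: b
  · rw [if_neg h₁, if_neg (mt hp.mp h₁), if_pos h₂, if_pos (hp.mpr h₂), mapCode_mk,
      List.flatMap_append, h₂.drop_flatMap]
  · rw [if_neg h₁, if_neg (mt hp.mp h₁), if_neg h₂, if_neg (mt hp.mp h₂), mapCode_zero]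

theorem mapCode_injective (hc : IsPrefixCode c) : Function.Injective (mapCode c) := by
  intro x y h
  rcases eq_zero_or_eq_mk x with rfl | ⟨a, b, rfl⟩ <;>
    rcases eq_zero_or_eq_mk y with rfl | ⟨a', b', rfl⟩
  · rfl
  · exact absurd h.symm (mk_ne_zero _ _)
  · exact absurd h (mk_ne_zero _ _)
  · rw [mapCode_mk, mapCode_mk, mk_inj] at h
    rw [hc.flatMap_injective h.1, hc.flatMap_injective h.2]

end PolyM

end DiGraph

open DiGraph in
/-- The polycyclic monoid `P_ω` on countably many generators embeds into the
polycyclic monoid `P₂`. -/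
theorem poly_omega_embeds_poly_two :
    ∃ f : PolyM ℕ →ₙ* PolyM Bool, Function.Injective f :=
  ⟨⟨PolyM.mapCode unaryCode, PolyM.mapCode_mul isPrefixCode_unaryCode⟩,
    PolyM.mapCode_injective isPrefixCode_unaryCode⟩
end

section
/- Let E be a graph with G(E) infinite and let f : (G(E), τ_{F_cf}) → (P_λ, τ_{F_cf}) be an injective homomorphism. Then f(0) = 0. -/
universe u

namespace DiGraph

variable {G : DiGraph.{u}}

/-- membership predicate for the basic neighbourhoods of zero: all of
`a b⁻¹` with `a, b ∈ F`, together with `0`. -/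
def inUF (F : Set G.GPath) : GIS G → Prop
  | none => True
  | some n => n.a ∈ F ∧ n.b ∈ F

/-- The basic neighbourhood `U_F(0) = {a b⁻¹ : a, b ∈ F} ∪ {0}` of zero. -/
def UF (F : Set G.GPath) : Set (GIS G) := {x | inUF F x}

lemma inUF_mono {F₁ F₂ : Set G.GPath} (h : F₁ ⊆ F₂) :
    ∀ x : GIS G, inUF F₁ x → inUF F₂ x := by
  intro x hx
  cases x with
  | none => trivial
  | some n => exact ⟨h hx.1, h hx.2⟩

/-- The topology `τ_𝓕` on `G(E)` determined by a filter `𝓕` on `Path(E)`: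
every nonzero element is isolated, and the sets `U_F(0)`, `F ∈ 𝓕`, form a
neighbourhood base at `0`. -/
def tauF (𝓕 : Filter G.GPath) : TopologicalSpace (GIS G) where
  IsOpen U := (0 : GIS G) ∈ U → ∃ F ∈ 𝓕, UF F ⊆ U
  isOpen_univ := fun _ => ⟨Set.univ, Filter.univ_mem, Set.subset_univ _⟩
  isOpen_inter := fun U V hU hV h0 => by
    obtain ⟨F₁, hF₁, hs₁⟩ := hU h0.1
    obtain ⟨F₂, hF₂, hs₂⟩ := hV h0.2
    exact ⟨F₁ ∩ F₂, Filter.inter_mem hF₁ hF₂, fun x hx =>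
      ⟨hs₁ (inUF_mono Set.inter_subset_left x hx),
       hs₂ (inUF_mono Set.inter_subset_right x hx)⟩⟩
  isOpen_sUnion := fun S hS h0 => by
    obtain ⟨U, hU, h0U⟩ := h0
    obtain ⟨F, hF, hs⟩ := hS U hU h0U
    exact ⟨F, hF, hs.trans (Set.subset_sUnion_of_mem hU)⟩

/-- The prefix partial order on paths: `a ≤ b` iff `b` is a prefix of `a`. -/
def prefLE (a b : G.GPath) : Prop := b.src = a.src ∧ b.edges <+: a.edges

/-- An ideal of `(Path(E), ≤)`: a set `A` with `↓A = A`. -/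
def IsIdeal (A : Set G.GPath) : Prop :=
  ∀ a b : G.GPath, prefLE a b → b ∈ A → a ∈ A

/-- A topological filter on `Path(E)`:
(i) for `F ∈ 𝓕` and paths `a, b` with `r(a) = r(b)`, the set
`F \ {bk : k ∈ Path(E), ak ∉ F}` belongs to `𝓕`;
(ii) `𝓕` contains all cofinite subsets of `Path(E)`;
(iii) `𝓕` has a base consisting of ideals of `(Path(E), ≤)`. -/
def IsTopFilter (𝓕 : Filter G.GPath) : Prop :=
  (∀ F ∈ 𝓕, ∀ a b : G.GPath, a.rng = b.rng →
      F \ {p | ∃ (k : G.GPath) (h1 : b.rng = k.src) (h2 : a.rng = k.src),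
        p = b.comp k h1 ∧ a.comp k h2 ∉ F} ∈ 𝓕) ∧
  𝓕 ≤ Filter.cofinite ∧
  (∀ F ∈ 𝓕, ∃ I ∈ 𝓕, I ⊆ F ∧ IsIdeal I)

variable (G) in
/-- The filter `𝓕_ω` generated by the sets `U_n = {u ∈ Path(E) : |u| > n}`. -/
def Fomega : Filter G.GPath :=
  Filter.generate {S | ∃ n : ℕ, S = {u : G.GPath | n < u.edges.length}}

variable (G) in
/-- `U_n(0) = {u v⁻¹ : min{|u|,|v|} > n} ∪ {0}`. -/
def Un (n : ℕ) : Set (GIS G) := UF {u : G.GPath | n < u.edges.length}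

end DiGraph

/-! A homomorphism `f` satisfies `f x * f 0 = f (x * 0) = f 0`, so the whole range of `f` fixes
`f 0` from the left. In a graph inverse semigroup `c d⁻¹ · a b⁻¹ = a b⁻¹` forces `c = d` to be a
prefix of `a`, so a nonzero element has only finitely many left identities; hence `f 0 ≠ 0` would
make the range of `f` finite, which is impossible for an injective map on an infinite set. -/

namespace DiGraph

variable {G : DiGraph.{u}}

theorem GPath.ext {p q : G.GPath} (hs : p.src = q.src) (he : p.edges = q.edges) : p = q := by
  cases p; cases q; cases hs; cases he; rfl

theorem GPath.finite_setOf_prefLE (a : G.GPath) : {d : G.GPath | prefLE a d}.Finite := by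
  refine Set.Finite.of_finite_image (f := GPath.edges) ((List.finite_toSet a.edges.inits).subset ?_)
    fun d hd d' hd' he => GPath.ext (hd.1.trans hd'.1.symm) he
  rintro _ ⟨d, hd, rfl⟩
  exact (List.mem_inits _ _).mpr hd.2

theorem GIS.mul_zero (x : GIS G) : x * 0 = 0 := by
  cases x <;> rfl

open scoped Classical in
theorem GIS.nz_mul_nz_s18 (n m : NZ G) :
    GIS.nz n * GIS.nz m =
      if h : n.b.src = m.a.src ∧ n.b.edges <+: m.a.edges then
        GIS.nz ⟨n.a.comp (n.b.strip m.a h.1 h.2) n.h, m.b,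
          (GPath.comp_rng _ _ _).trans ((GPath.strip_rng _ _ _ _).trans m.h)⟩
      else if h' : m.a.src = n.b.src ∧ m.a.edges <+: n.b.edges then
        GIS.nz ⟨n.a, m.b.comp (m.a.strip n.b h'.1 h'.2) m.h.symm,
          n.h.trans ((GPath.strip_rng _ _ _ _).symm.trans (GPath.comp_rng _ _ _).symm)⟩
      else 0 :=
  rfl

theorem GIS.exists_prefLE_of_mul_eq_self {p : GIS G} {n : NZ G} (h : p * GIS.nz n = GIS.nz n) :
    ∃ d, prefLE n.a d ∧ p = GIS.nz ⟨d, d, rfl⟩ := by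
  rcases p with _ | ⟨c, d, hcd⟩
  · exact absurd h nofun
  change GIS.nz ⟨c, d, hcd⟩ * GIS.nz n = GIS.nz n at h
  rw [GIS.nz_mul_nz_s18] at h
  split_ifs at h with hd ha
  · -- `c (d⁻¹ a) = a` with `d` a prefix of `a`: then `c` is the prefix of `a` of the same length
    have hca := congrArg NZ.a (Option.some.inj h)
    have hc : c.edges = d.edges := by
      rw [List.prefix_iff_eq_take.mp hd.2]
      refine List.append_cancel_right (bs := n.a.edges.drop d.edges.length) ?_
      rw [List.take_append_drop]
      exact congrArg GPath.edges hca
    obtain rfl : c = d := GPath.ext ((congrArg GPath.src hca).trans hd.1.symm) hc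
    exact ⟨_, hd, rfl⟩
  · -- `b (a⁻¹ d) = b` with `a` a prefix of `d`: then `d = a`, and `c = a`
    have hn := Option.some.inj h
    have hrest : d.edges.drop n.a.edges.length = [] :=
      List.append_right_eq_self.mp (congrArg (·.b.edges) hn)
    have hda : d = n.a := by
      refine GPath.ext ha.1.symm ?_
      rw [← List.take_append_drop n.a.edges.length d.edges, hrest, List.append_nil,
        ← List.prefix_iff_eq_take.mp ha.2]
    obtain rfl : c = n.a := congrArg NZ.a hn
    subst hda
    exact ⟨n.a, ⟨rfl, List.prefix_refl _⟩, rfl⟩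
  · exact absurd h nofun

theorem GIS.finite_setOf_mul_eq_self (n : NZ G) : {p : GIS G | p * GIS.nz n = GIS.nz n}.Finite :=
  ((GPath.finite_setOf_prefLE n.a).image fun d => GIS.nz ⟨d, d, rfl⟩).subset fun _ hp =>
    let ⟨d, hd, hp⟩ := GIS.exists_prefLE_of_mul_eq_self hp
    ⟨d, hd, hp.symm⟩

end DiGraph

open DiGraph in
/-- Let `E` be a graph with `G(E)` infinite and let
`f : (G(E), τ_{𝓕_cf}) → (P_λ, τ_{𝓕_cf})` be an injective homomorphism.
Then `f 0 = 0`. -/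
theorem injective_hom_maps_zero_to_zero (G : DiGraph.{u}) (ι : Type u)
    [Infinite (GIS G)] (f : GIS G →ₙ* PolyM ι) (hf : Function.Injective f) :
    f 0 = 0 := by
  by_contra h0
  obtain ⟨n, hn⟩ : ∃ n, f 0 = GIS.nz n := Option.ne_none_iff_exists'.mp h0
  have hrange : Set.range f ⊆ {p | p * f 0 = f 0} := by
    rintro _ ⟨x, rfl⟩
    exact (map_mul f x 0).symm.trans (congrArg f (GIS.mul_zero x))
  rw [hn] at hrange
  exact Set.infinite_range_of_injective hf ((GIS.finite_setOf_mul_eq_self n).subset hrange)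
end
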